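/- Let F be a Borel-amenable set of reductions and let D ⊆ D' be sets in Δ_F. For every A ⊆ ℝ, if A ∩ D' ≠ ℝ then A ∩ D ≤_F A ∩ D'. In particular, if D ∈ Δ_F and A ≠ ℝ then A ∩ D ≤_F A. -/

import Mathlib

open scoped Classical

/-- The standard metric on Baire space: `d x y = (1/2)^m` where `m` is least
with `x m ≠ y m`, and `0` if `x = y`. -/
noncomputable def bd (x y : ℕ → ℕ) : ℝ :=
  if h : x = y then 0 else (1 / 2 : ℝ) ^ (Nat.find (Function.ne_iff.mp h))

/-- `f` is Lipschitz with constant `C` with respect to `bd`. -/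
def LipWith (C : ℝ) (f : (ℕ → ℕ) → ℕ → ℕ) : Prop :=
  ∀ x y, bd (f x) (f y) ≤ C * bd x y

/-- The set of all Lipschitz functions (of any constant `2^k`, `k ∈ ℤ`). -/
def Lip : Set ((ℕ → ℕ) → ℕ → ℕ) := {f | ∃ k : ℤ, LipWith ((2 : ℝ) ^ k) f}

/-- `A` is `F`-reducible to `B`. -/
def Red (F : Set ((ℕ → ℕ) → (ℕ → ℕ))) (A B : Set (ℕ → ℕ)) : Prop :=
  ∃ f ∈ F, A = f ⁻¹' B

/-- The basic clopen set `N_⟨0⟩`. -/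
def N0 : Set (ℕ → ℕ) := {x | x 0 = 0}

/-- The characteristic set of `F`. -/
def Delta (F : Set ((ℕ → ℕ) → (ℕ → ℕ))) : Set (Set (ℕ → ℕ)) :=
  {A | Red F A N0}

/-- `F` is a Borel-amenable set of reductions: a set of Borel functions on Baire
space, closed under composition, containing all Lipschitz functions, and closed
under piecewise combinations along `Δ_F`-partitions. -/
def BorelAmenable (F : Set ((ℕ → ℕ) → (ℕ → ℕ))) : Prop :=
  (∀ f ∈ F, ∀ g ∈ F, f ∘ g ∈ F) ∧
  (∀ f ∈ F, Measurable f) ∧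
  Lip ⊆ F ∧
  (∀ (D : ℕ → Set (ℕ → ℕ)) (fs : ℕ → (ℕ → ℕ) → ℕ → ℕ) (g : (ℕ → ℕ) → ℕ → ℕ),
    (∀ n, D n ∈ Delta F) → Pairwise (Function.onFun Disjoint D) → (⋃ n, D n) = Set.univ →
    (∀ n, fs n ∈ F) → (∀ n, ∀ x ∈ D n, g x = fs n x) → g ∈ F)

/-! Since `Δ_F` is closed under complements, a set `D ∈ Δ_F` lets us glue the identity on `D`
with the constant map `z` off `D`. If `z ∉ B` and `A`, `B` agree on `D`, the glued map reduces
`A ∩ D` to `B`; both parts of the theorem are instances, with `B = A ∩ D'` and `B = A`. -/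

open Set

lemma bd_nonneg (x y : ℕ → ℕ) : 0 ≤ bd x y := by
  unfold bd; split <;> positivity

lemma lipWith_one_of_agree {f : (ℕ → ℕ) → ℕ → ℕ}
    (hf : ∀ x y n, (∀ k < n, x k = y k) → ∀ k < n, f x k = f y k) : LipWith 1 f := by
  intro x y
  rw [one_mul]
  by_cases hfxy : f x = f y
  · simpa [bd, hfxy] using bd_nonneg x y
  have hxy : x ≠ y := fun h => hfxy (h ▸ rfl)
  simp only [bd, dif_neg hfxy, dif_neg hxy]
  apply pow_le_pow_of_le_one (by norm_num) (by norm_num)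
  rw [Nat.le_find_iff]
  intro m hm
  exact not_not.2 <| hf x y _ (fun k hk => not_not.1 (Nat.find_min _ hk)) m hm

lemma mem_Lip_of_lipWith_one {f : (ℕ → ℕ) → ℕ → ℕ} (hf : LipWith 1 f) : f ∈ Lip :=
  ⟨0, by simpa using hf⟩

lemma id_mem_Lip : (id : (ℕ → ℕ) → ℕ → ℕ) ∈ Lip :=
  mem_Lip_of_lipWith_one <| lipWith_one_of_agree fun _ _ _ h => h

lemma const_mem_Lip (z : ℕ → ℕ) : (fun _ : ℕ → ℕ => z) ∈ Lip :=
  mem_Lip_of_lipWith_one <| lipWith_one_of_agree fun _ _ _ _ _ _ => rfl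

noncomputable def toggleHead (x : ℕ → ℕ) : ℕ → ℕ :=
  Function.update x 0 (if x 0 = 0 then 1 else 0)

lemma toggleHead_mem_Lip : toggleHead ∈ Lip := by
  refine mem_Lip_of_lipWith_one <| lipWith_one_of_agree fun x y n h k hk => ?_
  rcases eq_or_ne k 0 with rfl | hk0
  · simp [toggleHead, h 0 hk]
  · simp [toggleHead, hk0, h k hk]

lemma toggleHead_preimage_N0 : toggleHead ⁻¹' N0 = N0ᶜ := by
  ext x
  by_cases hx : x 0 = 0 <;> simp [toggleHead, N0, hx]

namespace BorelAmenable

variable {F : Set ((ℕ → ℕ) → ℕ → ℕ)} (hF : BorelAmenable F)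
include hF

lemma comp_mem {f g : (ℕ → ℕ) → ℕ → ℕ} (hf : f ∈ F) (hg : g ∈ F) : f ∘ g ∈ F :=
  hF.1 f hf g hg

lemma lip_subset : Lip ⊆ F :=
  hF.2.2.1

lemma empty_mem_Delta : (∅ : Set (ℕ → ℕ)) ∈ Delta F :=
  ⟨fun _ _ => 1, hF.lip_subset (const_mem_Lip _), by ext; simp [N0]⟩

lemma compl_mem_Delta {D : Set (ℕ → ℕ)} (hD : D ∈ Delta F) : Dᶜ ∈ Delta F := by
  obtain ⟨f, hf, rfl⟩ := hD
  exact ⟨toggleHead ∘ f, hF.comp_mem (hF.lip_subset toggleHead_mem_Lip) hf, by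
    rw [preimage_comp, toggleHead_preimage_N0, preimage_compl]⟩

lemma piecewise_mem {D : Set (ℕ → ℕ)} (hD : D ∈ Delta F) {f g : (ℕ → ℕ) → ℕ → ℕ}
    (hf : f ∈ F) (hg : g ∈ F) : D.piecewise f g ∈ F := by
  -- the partition `D, Dᶜ, ∅, ∅, …` is written as the fibres of the index map
  set index : (ℕ → ℕ) → ℕ := fun x => if x ∈ D then 0 else 1
  have hfibre : ∀ n, index ⁻¹' {n} = if n = 0 then D else if n = 1 then Dᶜ else ∅ := by
    intro n
    ext x
    by_cases hx : x ∈ D <;> rcases n with _ | _ | n <;> simp [index, hx]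
  refine hF.2.2.2 (fun n => index ⁻¹' {n}) (fun n => if n = 0 then f else g) _
    (fun n => ?_) (pairwise_disjoint_fiber index)
    (eq_univ_of_forall fun x => mem_iUnion.2 ⟨_, rfl⟩)
    (fun n => by split_ifs <;> assumption) (fun n x hx => ?_)
  · rw [hfibre]
    split_ifs
    exacts [hD, hF.compl_mem_Delta hD, hF.empty_mem_Delta]
  · rw [mem_preimage, mem_singleton_iff] at hx
    subst hx
    by_cases hxD : x ∈ D <;> simp [index, hxD]

lemma red_inter_of_agreeOn {D A B : Set (ℕ → ℕ)} (hD : D ∈ Delta F)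
    (hAB : ∀ x ∈ D, x ∈ B ↔ x ∈ A) (hB : B ≠ univ) : Red F (A ∩ D) B := by
  obtain ⟨z, hz⟩ := (ne_univ_iff_exists_notMem B).1 hB
  refine ⟨D.piecewise id fun _ => z,
    hF.piecewise_mem hD (hF.lip_subset id_mem_Lip) (hF.lip_subset (const_mem_Lip z)), ?_⟩
  ext x
  by_cases hx : x ∈ D
  · simp [hx, hAB x hx]
  · simp [hx, hz]

end BorelAmenable

theorem stmt9_general (F : Set ((ℕ → ℕ) → (ℕ → ℕ))) (hF : BorelAmenable F)
    (D D' : Set (ℕ → ℕ)) (hD : D ∈ Delta F)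
    (hDD' : D ⊆ D') :
    (∀ A : Set (ℕ → ℕ), A ∩ D' ≠ Set.univ → Red F (A ∩ D) (A ∩ D')) ∧
    (∀ A : Set (ℕ → ℕ), A ≠ Set.univ → Red F (A ∩ D) A) :=
  ⟨fun _ hA => hF.red_inter_of_agreeOn hD (fun _ hx => and_iff_left (hDD' hx)) hA,
    fun _ hA => hF.red_inter_of_agreeOn hD (fun _ _ => Iff.rfl) hA⟩

theorem stmt9 (F : Set ((ℕ → ℕ) → (ℕ → ℕ))) (hF : BorelAmenable F)
    (D D' : Set (ℕ → ℕ)) (hD : D ∈ Delta F) (hD' : D' ∈ Delta F)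
    (hDD' : D ⊆ D') :
    (∀ A : Set (ℕ → ℕ), A ∩ D' ≠ Set.univ → Red F (A ∩ D) (A ∩ D')) ∧
    (∀ A : Set (ℕ → ℕ), A ≠ Set.univ → Red F (A ∩ D) A) :=
  stmt9_general F hF D D' hD hDD'
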